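/- Assume P(lim_{|k|→∞} ‖Y_k‖ = 0) = 1. Then for every shift invariant nonnegative measurable functional H on E (i.e., H(Bx) = H(x) for all x), ϑ · E[H(Q)] = E[H(Θ) · 1{I(Θ) = 0}]. -/

import Mathlib

open MeasureTheory ProbabilityTheory Set Filter
open scoped ENNReal NNReal Topology

noncomputable section

/-- The iterated backshift operator: `(B^k x) j = x (j - k)`. -/
def backshift {V : Type*} (k : ℤ) (x : ℤ → V) : ℤ → V := fun j => x (j - k)

/-- `InfargmaxAt x j` is the event `I(x) = j` for the infargmax functional `I`:
the first time the supremum of the norms is achieved is `j`, i.e.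
`sup_{i<j} ‖x_i‖ < ‖x_j‖` and `sup_{i>j} ‖x_i‖ ≤ ‖x_j‖`.  (`I(x) ∈ ℤ` is then
expressed as `∃ j, InfargmaxAt x j`.) -/
def InfargmaxAt {V : Type*} [NormedAddCommGroup V] (x : ℤ → V) (j : ℤ) : Prop :=
  (⨆ i : {i : ℤ // i < j}, (‖x i.1‖₊ : ℝ≥0∞)) < (‖x j‖₊ : ℝ≥0∞) ∧
    (⨆ i : {i : ℤ // j < i}, (‖x i.1‖₊ : ℝ≥0∞)) ≤ (‖x j‖₊ : ℝ≥0∞)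

/-!
Under `ν`, a sequence with an exceedance `‖y_m‖ > 1` almost surely tends to `0`: at `m = 0` this
is the assumption on `Y`, and shift invariance moves it to every `m`. Such a sequence has exactly
one shift whose first exceedance is at time `0`, exactly one whose last exceedance is at time `0`,
and exactly one whose infargmax is `0` (the maximum being an exceedance). By the mass-transport
principle for the shift-invariant `ν`, the three corresponding sets carry the same integral of
every shift-invariant functional `G`. With `G = 1` this gives
`ϑ = P(sup_{j ≤ -1} ‖Y_j‖ ≤ 1)`; with `G(y) = H(y / y*)` it identifies `ϑ E[H(Q)]` with the
integral of `H(y / y*)` over `{I(y) = 0, ‖y_0‖ > 1}`, which is `E[H(Θ) 1{I(Θ) = 0}]` because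
`y / y* = y / ‖y_0‖` when `I(y) = 0`.
-/

section Transfer

variable {Ω E : Type*} [MeasurableSpace Ω] [MeasurableSpace E] {P : Measure Ω} {ν : Measure E}
  {Y : Ω → E} {S T : Set E}

lemma setLIntegral_comp_of_map_eq_restrict (hY : Measurable Y) (hlaw : P.map Y = ν.restrict S)
    (hT : MeasurableSet T) {g : E → ℝ≥0∞} (hg : Measurable g) :
    ∫⁻ ω in Y ⁻¹' T, g (Y ω) ∂P = ∫⁻ y in T ∩ S, g y ∂ν := by
  rw [← setLIntegral_map hT hg hY, hlaw, Measure.restrict_restrict hT]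

lemma measure_preimage_of_map_eq_restrict (hY : Measurable Y) (hlaw : P.map Y = ν.restrict S)
    (hT : MeasurableSet T) : P (Y ⁻¹' T) = ν (T ∩ S) := by
  rw [← Measure.map_apply hY hT, hlaw, Measure.restrict_apply hT]

lemma ae_imp_of_map_eq_restrict (hY : Measurable Y) (hlaw : P.map Y = ν.restrict S)
    (hS : MeasurableSet S) (hT : MeasurableSet T) (h : ∀ᵐ ω ∂P, Y ω ∈ T) :
    ∀ᵐ y ∂ν, y ∈ S → y ∈ T := by
  rw [← ae_restrict_iff' hS, ← hlaw]
  exact (ae_map_iff hY.aemeasurable hT).2 h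

variable {Ω' : Type*} [MeasurableSpace Ω'] {P' : Measure Ω'} {Q : Ω' → E} {A : Set Ω}
  {f : Ω → E}

lemma measure_ne_zero_of_map_eq_map_cond [IsProbabilityMeasure P'] (hQ : Measurable Q)
    (hlaw : P'.map Q = (P[|A]).map f) : P A ≠ 0 := fun h => by
  have := Measure.isProbabilityMeasure_map (μ := P') hQ.aemeasurable
  rw [hlaw, cond_eq_zero_of_meas_eq_zero h, Measure.map_zero] at this
  exact IsProbabilityMeasure.ne_zero (0 : Measure E) rfl

lemma lintegral_comp_of_map_eq_map_cond (hQ : Measurable Q) (hf : Measurable f)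
    (hlaw : P'.map Q = (P[|A]).map f) {H : E → ℝ≥0∞} (hH : Measurable H) :
    ∫⁻ ω', H (Q ω') ∂P' = (P A)⁻¹ * ∫⁻ ω in A, H (f ω) ∂P := by
  rw [← lintegral_map hH hQ, hlaw, lintegral_map hH hf, ProbabilityTheory.cond,
    lintegral_smul_measure, smul_eq_mul]

end Transfer

section SequenceSpace

variable {V : Type*}

lemma backshift_apply (k : ℤ) (x : ℤ → V) (j : ℤ) : backshift k x j = x (j - k) := rfl

lemma backshift_zero : (backshift 0 : (ℤ → V) → ℤ → V) = id := by
  funext x j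
  simp [backshift]

lemma backshift_add (a b : ℤ) :
    (backshift (a + b) : (ℤ → V) → ℤ → V) = backshift a ∘ backshift b := by
  funext x j
  simp [backshift, sub_sub]

@[simp]
lemma backshift_backshift_neg (k : ℤ) (x : ℤ → V) : backshift k (backshift (-k) x) = x := by
  funext j
  simp [backshift]

@[simp]
lemma backshift_neg_backshift (k : ℤ) (x : ℤ → V) : backshift (-k) (backshift k x) = x := by
  simpa using backshift_backshift_neg (-k) x

lemma apply_backshift_eq_of_one {β : Type*} {G : (ℤ → V) → β}
    (h : ∀ x, G (backshift 1 x) = G x) (k : ℤ) (x : ℤ → V) : G (backshift k x) = G x := by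
  induction k using Int.induction_on generalizing x with
  | zero => rw [backshift_zero, id]
  | succ k ih => rw [backshift_add, Function.comp_apply, ih, h]
  | pred k ih =>
    rw [sub_eq_add_neg, backshift_add, Function.comp_apply, ih, ← h (backshift (-1) x),
      backshift_backshift_neg]

lemma iSup_norm_backshift [Norm V] (k : ℤ) (x : ℤ → V) :
    ⨆ j, ‖backshift k x j‖ = ⨆ j, ‖x j‖ :=
  (Equiv.subRight k).iSup_comp (g := fun j => ‖x j‖)

lemma Filter.Tendsto.backshift [TopologicalSpace V] [Zero V] {x : ℤ → V}
    (hx : Tendsto x cofinite (𝓝 0)) (k : ℤ) : Tendsto (backshift k x) cofinite (𝓝 0) :=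
  hx.comp (sub_left_injective (b := k)).tendsto_cofinite

section Measurable

variable [MeasurableSpace V] {ν : Measure (ℤ → V)}

lemma measurable_backshift (k : ℤ) : Measurable (backshift k : (ℤ → V) → ℤ → V) :=
  measurable_pi_lambda _ fun j => measurable_pi_apply (j - k)

lemma measurePreserving_backshift (h : ν.map (backshift 1) = ν) (k : ℤ) :
    MeasurePreserving (backshift k) ν ν := by
  have h₁ : MeasurePreserving (backshift 1) ν ν := ⟨measurable_backshift 1, h⟩
  have hneg : MeasurePreserving (backshift (-1)) ν ν := by
    refine ⟨measurable_backshift _, ?_⟩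
    conv_lhs => rw [← h]
    rw [Measure.map_map (measurable_backshift _) (measurable_backshift _), ← backshift_add,
      neg_add_cancel, backshift_zero, Measure.map_id]
  induction k using Int.induction_on with
  | zero => rw [backshift_zero]; exact MeasurePreserving.id ν
  | succ k ih => rw [backshift_add]; exact ih.comp h₁
  | pred k ih => rw [sub_eq_add_neg, backshift_add]; exact ih.comp hneg

end Measurable

section Norms

variable [NormedAddCommGroup V]

lemma finite_setOf_le_norm {ι : Type*} {y : ι → V} (hy : Tendsto y cofinite (𝓝 0)) {ε : ℝ}
    (hε : 0 < ε) : {k | ε ≤ ‖y k‖}.Finite := by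
  simpa only [not_lt] using Filter.eventually_cofinite.1
    ((tendsto_zero_iff_norm_tendsto_zero.1 hy).eventually (gt_mem_nhds hε))

lemma finite_setOf_one_lt_norm {x : ℤ → V} (hx : Tendsto x cofinite (𝓝 0)) :
    {i | 1 < ‖x i‖}.Finite :=
  (finite_setOf_le_norm hx one_pos).subset (Set.ofPred_subset_ofPred.2 fun _ => le_of_lt)

lemma exists_forall_norm_le {ι : Type*} [Nonempty ι] {y : ι → V}
    (hy : Tendsto y cofinite (𝓝 0)) : ∃ i, ∀ k, ‖y k‖ ≤ ‖y i‖ := by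
  by_cases hzero : ∀ i, y i = 0
  · exact ⟨Classical.arbitrary ι, fun k => by simp [hzero]⟩
  obtain ⟨m, hm⟩ := not_forall.1 hzero
  obtain ⟨i, -, hi⟩ := Set.exists_max_image _ (fun k => ‖y k‖)
    (finite_setOf_le_norm hy (norm_pos_iff.2 hm)) ⟨m, le_refl ‖y m‖⟩
  refine ⟨i, fun k => ?_⟩
  by_cases hk : ‖y m‖ ≤ ‖y k‖
  · exact hi k hk
  · exact (not_le.1 hk).le.trans (hi m (le_refl ‖y m‖))

end Norms

section Infargmax

variable [NormedAddCommGroup V] {x : ℤ → V} {j : ℤ}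

lemma infargmaxAt_of_forall_norm_le {c : ℝ} (hc : c < ‖x j‖) (hbefore : ∀ i < j, ‖x i‖ ≤ c)
    (hle : ∀ i, ‖x i‖ ≤ ‖x j‖) : InfargmaxAt x j := by
  have hpos : 0 < ‖x j‖ := ((norm_nonneg _).trans (hbefore _ (sub_one_lt j))).trans_lt hc
  refine ⟨(iSup_le fun i => ?_).trans_lt (b := ENNReal.ofReal c) ?_,
    iSup_le fun i => enorm_le_iff_norm_le.2 (hle i)⟩
  · rw [← enorm_eq_nnnorm, ← ofReal_norm]
    exact ENNReal.ofReal_le_ofReal (hbefore i i.2)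
  · rw [← enorm_eq_nnnorm, ← ofReal_norm]
    exact (ENNReal.ofReal_lt_ofReal_iff hpos).2 hc

lemma InfargmaxAt.norm_le (h : InfargmaxAt x j) (i : ℤ) : ‖x i‖ ≤ ‖x j‖ := by
  rcases lt_trichotomy i j with hij | rfl | hij
  · exact enorm_le_iff_norm_le.1 ((le_iSup (fun i : {i // i < j} => ‖x i‖ₑ) ⟨i, hij⟩).trans h.1.le)
  · exact le_rfl
  · exact enorm_le_iff_norm_le.1 ((le_iSup (fun i : {i // j < i} => ‖x i‖ₑ) ⟨i, hij⟩).trans h.2)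

lemma InfargmaxAt.norm_lt (h : InfargmaxAt x j) {i : ℤ} (hij : i < j) : ‖x i‖ < ‖x j‖ :=
  (lt_iff_lt_of_le_iff_le enorm_le_iff_norm_le).1
    ((le_iSup (fun i : {i // i < j} => ‖x i‖ₑ) ⟨i, hij⟩).trans_lt h.1)

lemma InfargmaxAt.unique {j' : ℤ} (h : InfargmaxAt x j) (h' : InfargmaxAt x j') : j = j' := by
  by_contra hne
  rcases lt_or_gt_of_ne hne with hlt | hlt
  · exact (h'.norm_lt hlt).not_ge (h.norm_le j')
  · exact (h.norm_lt hlt).not_ge (h'.norm_le j)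

lemma InfargmaxAt.norm_pos (h : InfargmaxAt x j) : 0 < ‖x j‖ :=
  (norm_nonneg _).trans_lt (h.norm_lt (sub_one_lt j))

lemma InfargmaxAt.iSup_norm_eq (h : InfargmaxAt x j) : ⨆ i, ‖x i‖ = ‖x j‖ :=
  le_antisymm (ciSup_le h.norm_le) (le_ciSup ⟨‖x j‖, Set.forall_mem_range.2 h.norm_le⟩ j)

lemma infargmaxAt_backshift (k : ℤ) :
    InfargmaxAt (backshift k x) j ↔ InfargmaxAt x (j - k) := by
  let e₁ : {i // i < j - k} ≃ {i // i < j} :=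
    (Equiv.addRight k).subtypeEquiv fun i => by simp [lt_sub_iff_add_lt]
  let e₂ : {i // j - k < i} ≃ {i // j < i} :=
    (Equiv.addRight k).subtypeEquiv fun i => by simp [sub_lt_iff_lt_add]
  have h₁ : ⨆ i : {i // i < j}, (‖backshift k x i‖₊ : ℝ≥0∞)
      = ⨆ i : {i // i < j - k}, (‖x i‖₊ : ℝ≥0∞) := by
    rw [← e₁.iSup_comp]
    refine iSup_congr fun i => ?_
    show (‖x (i.1 + k - k)‖₊ : ℝ≥0∞) = ‖x i‖₊
    rw [add_sub_cancel_right]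
  have h₂ : ⨆ i : {i // j < i}, (‖backshift k x i‖₊ : ℝ≥0∞)
      = ⨆ i : {i // j - k < i}, (‖x i‖₊ : ℝ≥0∞) := by
    rw [← e₂.iSup_comp]
    refine iSup_congr fun i => ?_
    show (‖x (i.1 + k - k)‖₊ : ℝ≥0∞) = ‖x i‖₊
    rw [add_sub_cancel_right]
  rw [InfargmaxAt, InfargmaxAt, h₁, h₂, backshift_apply]

lemma infargmaxAt_smul [NormedSpace ℝ V] {c : ℝ} (hc : c ≠ 0) :
    InfargmaxAt (c • x) j ↔ InfargmaxAt x j := by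
  have hc₀ : (‖c‖₊ : ℝ≥0∞) ≠ 0 := by simpa using hc
  have hsmul : ∀ i, (‖(c • x) i‖₊ : ℝ≥0∞) = ‖c‖₊ * ‖x i‖₊ := fun i => by
    rw [Pi.smul_apply, nnnorm_smul, ENNReal.coe_mul]
  simp only [InfargmaxAt, hsmul, ← ENNReal.mul_iSup,
    ENNReal.mul_lt_mul_iff_right hc₀ ENNReal.coe_ne_top,
    ENNReal.mul_le_mul_iff_right hc₀ ENNReal.coe_ne_top]

lemma infargmaxAt_inv_norm_smul [NormedSpace ℝ V] :
    InfargmaxAt (‖x j‖⁻¹ • x) j ↔ InfargmaxAt x j := by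
  by_cases hx : x j = 0
  · have hnot : ∀ y : ℤ → V, y j = 0 → ¬InfargmaxAt y j := fun y hy h => by
      simpa [hy] using h.norm_pos
    simp [hx, hnot]
  · exact infargmaxAt_smul (by simpa using hx)



lemma exists_infargmaxAt (hx : Tendsto x cofinite (𝓝 0)) {m : ℤ} (hm : x m ≠ 0) :
    ∃ j, InfargmaxAt x j := by
  obtain ⟨i, hi⟩ := exists_forall_norm_le hx
  have hbdd : ∃ b, ∀ j, (∀ k, ‖x k‖ ≤ ‖x j‖) → b ≤ j := by
    obtain ⟨b, hb⟩ := (finite_setOf_le_norm hx (norm_pos_iff.2 hm)).bddBelow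
    exact ⟨b, fun j hj => hb (hj m)⟩
  obtain ⟨j, hj, hleast⟩ := Int.exists_least_of_bdd hbdd ⟨i, hi⟩
  have hbefore : ∀ i < j, ‖x i‖ < ‖x j‖ := fun i hij =>
    lt_of_not_ge fun hle => hij.not_ge (hleast i fun k => (hj k).trans hle)
  -- the maximal norm strictly before `j` is attained, hence is a strict upper bound
  let y : ℤ → V := {i | i < j}.indicator x
  have hy : Tendsto y cofinite (𝓝 0) :=
    squeeze_zero_norm (fun i => norm_indicator_le_norm_self x i)
      (tendsto_zero_iff_norm_tendsto_zero.1 hx)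
  obtain ⟨i₀, hi₀⟩ := exists_forall_norm_le hy
  refine ⟨j, infargmaxAt_of_forall_norm_le (c := ‖y i₀‖) ?_ (fun i hij => ?_) hj⟩
  · by_cases hi₀j : i₀ < j
    · simpa [y, hi₀j] using hbefore i₀ hi₀j
    · simpa [y, hi₀j] using (norm_nonneg _).trans_lt (hbefore (j - 1) (sub_one_lt j))
  · simpa [y, hij] using hi₀ i

end Infargmax

section Exceedance

variable [NormedAddCommGroup V] {x : ℤ → V}

lemma existsUnique_backshift_mem_infargmaxAt (hx : Tendsto x cofinite (𝓝 0)) {m : ℤ}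
    (hm : 1 < ‖x m‖) : ∃! k, backshift k x ∈ {y | InfargmaxAt y 0} ∩ {y | 1 < ‖y 0‖} := by
  have hmem : ∀ k, backshift k x ∈ {y | InfargmaxAt y 0} ∩ {y | 1 < ‖y 0‖} ↔
      InfargmaxAt x (-k) ∧ 1 < ‖x (-k)‖ := fun k => by
    simp [infargmaxAt_backshift, backshift_apply]
  obtain ⟨j, hj⟩ := exists_infargmaxAt hx (norm_pos_iff.1 (one_pos.trans hm))
  refine ⟨-j, (hmem _).2 ?_, fun k hk => ?_⟩
  · rw [neg_neg]
    exact ⟨hj, hm.trans_le (hj.norm_le m)⟩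
  · have := ((hmem k).1 hk).1.unique hj
    omega


lemma existsUnique_backshift_mem_firstExceedance (hx : Tendsto x cofinite (𝓝 0)) {m : ℤ}
    (hm : 1 < ‖x m‖) :
    ∃! k, backshift k x ∈ {y | ∀ j ≤ -1, ‖y j‖ ≤ 1} ∩ {y | 1 < ‖y 0‖} := by
  have hmem : ∀ k, backshift k x ∈ {y | ∀ j ≤ -1, ‖y j‖ ≤ 1} ∩ {y | 1 < ‖y 0‖} ↔
      IsLeast {i | 1 < ‖x i‖} (-k) := fun k => by
    simp only [mem_inter_iff, mem_ofPred_eq, backshift_apply, zero_sub, IsLeast, mem_lowerBounds]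
    refine and_comm.trans (and_congr_right fun _ => ⟨fun h i hi => ?_, fun h j hj => ?_⟩)
    · by_contra hlt
      exact (h (i + k) (by omega)).not_gt (by simpa using hi)
    · by_contra hgt
      have := h _ (not_le.1 hgt)
      omega
  obtain ⟨j, hj⟩ : ∃ j, IsLeast {i | 1 < ‖x i‖} j :=
    Int.exists_least_of_bdd (finite_setOf_one_lt_norm hx).bddBelow ⟨m, hm⟩
  refine ⟨-j, (hmem _).2 (by rwa [neg_neg]), fun k hk => ?_⟩
  have := ((hmem k).1 hk).unique hj
  omega

lemma existsUnique_backshift_mem_lastExceedance (hx : Tendsto x cofinite (𝓝 0)) {m : ℤ}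
    (hm : 1 < ‖x m‖) :
    ∃! k, backshift k x ∈ {y | ∀ j, 1 ≤ j → ‖y j‖ ≤ 1} ∩ {y | 1 < ‖y 0‖} := by
  have hmem : ∀ k, backshift k x ∈ {y | ∀ j, 1 ≤ j → ‖y j‖ ≤ 1} ∩ {y | 1 < ‖y 0‖} ↔
      IsGreatest {i | 1 < ‖x i‖} (-k) := fun k => by
    simp only [mem_inter_iff, mem_ofPred_eq, backshift_apply, zero_sub, IsGreatest,
      mem_upperBounds]
    refine and_comm.trans (and_congr_right fun _ => ⟨fun h i hi => ?_, fun h j hj => ?_⟩)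
    · by_contra hlt
      exact (h (i + k) (by omega)).not_gt (by simpa using hi)
    · by_contra hgt
      have := h _ (not_le.1 hgt)
      omega
  obtain ⟨j, hj⟩ : ∃ j, IsGreatest {i | 1 < ‖x i‖} j :=
    Int.exists_greatest_of_bdd (finite_setOf_one_lt_norm hx).bddAbove ⟨m, hm⟩
  refine ⟨-j, (hmem _).2 (by rwa [neg_neg]), fun k hk => ?_⟩
  have := ((hmem k).1 hk).unique hj
  omega

end Exceedance

lemma tsum_indicator_backshift_eq_one {B : Set (ℤ → V)} {x : ℤ → V}
    (h : ∃! k, backshift k x ∈ B) : ∑' k, B.indicator (1 : (ℤ → V) → ℝ≥0∞) (backshift k x) = 1 := by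
  obtain ⟨k₀, hk₀, huniq⟩ := h
  rw [tsum_eq_single k₀ fun k hk => indicator_of_notMem (fun h => hk (huniq k h)) _,
    indicator_of_mem hk₀, Pi.one_apply]

section MassTransport

variable [MeasurableSpace V] {ν : Measure (ℤ → V)}

theorem lintegral_tsum_backshift_swap (hν : ∀ k, MeasurePreserving (backshift k) ν ν)
    {f : (ℤ → V) → (ℤ → V) → ℝ≥0∞} (hf : Measurable (Function.uncurry f)) :
    ∫⁻ x, ∑' k, f x (backshift k x) ∂ν = ∫⁻ x, ∑' k, f (backshift k x) x ∂ν := by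
  have hmeas : ∀ k, Measurable fun x => f x (backshift k x) := fun k =>
    hf.comp (measurable_id.prodMk (measurable_backshift k))
  have hmeas' : ∀ k, Measurable fun x => f (backshift k x) x := fun k =>
    hf.comp ((measurable_backshift k).prodMk measurable_id)
  rw [lintegral_tsum fun k => (hmeas k).aemeasurable, ← (Equiv.neg ℤ).tsum_eq,
    lintegral_tsum fun k => (hmeas' k).aemeasurable]
  refine tsum_congr fun k => ?_
  rw [← (hν k).lintegral_comp (hmeas _)]
  simp

theorem setLIntegral_eq_of_existsUnique_backshift_mem
    (hν : ∀ k, MeasurePreserving (backshift k) ν ν) {A B : Set (ℤ → V)}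
    (hA : MeasurableSet A) (hB : MeasurableSet B)
    (hAB : ∀ᵐ x ∂ν, x ∈ A → ∃! k, backshift k x ∈ B)
    (hBA : ∀ᵐ x ∂ν, x ∈ B → ∃! k, backshift k x ∈ A)
    {G : (ℤ → V) → ℝ≥0∞} (hG : Measurable G) (hGs : ∀ k x, G (backshift k x) = G x) :
    ∫⁻ x in A, G x ∂ν = ∫⁻ x in B, G x ∂ν := by
  let f : (ℤ → V) → (ℤ → V) → ℝ≥0∞ := fun x y => A.indicator G x * B.indicator 1 y
  have hf : Measurable (Function.uncurry f) :=
    ((hG.indicator hA).comp measurable_fst).mul ((measurable_one.indicator hB).comp measurable_snd)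
  have hleft : ∀ᵐ x ∂ν, ∑' k, f x (backshift k x) = A.indicator G x := by
    filter_upwards [hAB] with x hx
    rw [ENNReal.tsum_mul_left]
    by_cases hxA : x ∈ A
    · rw [tsum_indicator_backshift_eq_one (hx hxA), mul_one]
    · rw [indicator_of_notMem hxA, zero_mul]
  have hright : ∀ᵐ x ∂ν, ∑' k, f (backshift k x) x = B.indicator G x := by
    filter_upwards [hBA] with x hx
    have hAk : ∀ k, A.indicator G (backshift k x) = A.indicator 1 (backshift k x) * G x :=
      fun k => by by_cases h : backshift k x ∈ A <;> simp [h, hGs]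
    simp only [f, hAk, mul_right_comm _ (G x), ENNReal.tsum_mul_right]
    by_cases hxB : x ∈ B
    · rw [tsum_indicator_backshift_eq_one (hx hxB), indicator_of_mem hxB, indicator_of_mem hxB]
      simp
    · simp [indicator_of_notMem hxB]
  rw [← lintegral_indicator hA, ← lintegral_indicator hB, ← lintegral_congr_ae hleft,
    ← lintegral_congr_ae hright, lintegral_tsum_backshift_swap hν hf]

end MassTransport

section Measurability

variable [NormedAddCommGroup V] [MeasurableSpace V] [OpensMeasurableSpace V]

lemma measurableSet_forall_norm_le_one (p : ℤ → Prop) :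
    MeasurableSet {x : ℤ → V | ∀ j, p j → ‖x j‖ ≤ 1} := by
  rw [ofPred_forall]
  refine .iInter fun j => ?_
  by_cases hj : p j
  · simpa [hj] using measurableSet_le (measurable_pi_apply j).norm measurable_const
  · simp [hj]

lemma measurableSet_one_lt_norm (j : ℤ) : MeasurableSet {x : ℤ → V | 1 < ‖x j‖} :=
  measurableSet_lt measurable_const (measurable_pi_apply j).norm

lemma measurableSet_infargmaxAt (j : ℤ) : MeasurableSet {x : ℤ → V | InfargmaxAt x j} := by
  have hnorm : ∀ i, Measurable fun x : ℤ → V => (‖x i‖₊ : ℝ≥0∞) := fun i =>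
    (measurable_pi_apply i).nnnorm.coe_nnreal_ennreal
  exact (measurableSet_lt (.iSup fun i : {i // i < j} => hnorm i.1) (hnorm j)).inter
    (measurableSet_le (.iSup fun i : {i // j < i} => hnorm i.1) (hnorm j))

lemma measurableSet_tendsto_zero : MeasurableSet {x : ℤ → V | Tendsto x cofinite (𝓝 0)} := by
  rw [Int.cofinite_eq]
  exact measurableSet_tendsto _ measurable_pi_apply

end Measurability

section SupNormalize

variable [NormedAddCommGroup V] [NormedSpace ℝ V]

/-- `y / y*` in the paper's notation. -/
def supNormalize (y : ℤ → V) : ℤ → V := (⨆ j, ‖y j‖)⁻¹ • y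

lemma supNormalize_backshift (k : ℤ) (y : ℤ → V) :
    supNormalize (backshift k y) = backshift k (supNormalize y) := by
  rw [supNormalize, supNormalize, iSup_norm_backshift]
  rfl

lemma InfargmaxAt.supNormalize_eq {y : ℤ → V} {j : ℤ} (h : InfargmaxAt y j) :
    supNormalize y = ‖y j‖⁻¹ • y := by
  rw [supNormalize, h.iSup_norm_eq]

lemma measurable_supNormalize [MeasurableSpace V] [BorelSpace V] :
    Measurable (supNormalize : (ℤ → V) → ℤ → V) :=
  measurable_pi_lambda _ fun j =>
    (Measurable.iSup fun i => (measurable_pi_apply i).norm).inv.smul (measurable_pi_apply j)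

lemma setLIntegral_infargmaxAt_eq_supNormalize [MeasurableSpace V] [BorelSpace V] {Ω : Type*}
    [MeasurableSpace Ω] {P : Measure Ω} {Y Θ : Ω → ℤ → V} (hY : Measurable Y)
    (hΘ : ∀ ω, Θ ω = ‖Y ω 0‖⁻¹ • Y ω) (H : (ℤ → V) → ℝ≥0∞) :
    ∫⁻ ω in {ω | InfargmaxAt (Θ ω) 0}, H (Θ ω) ∂P
      = ∫⁻ ω in Y ⁻¹' {y | InfargmaxAt y 0}, H (supNormalize (Y ω)) ∂P := by
  have hset : {ω | InfargmaxAt (Θ ω) 0} = Y ⁻¹' {y | InfargmaxAt y 0} := by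
    ext ω
    simp [hΘ, infargmaxAt_inv_norm_smul]
  rw [hset]
  refine setLIntegral_congr_fun (hY (measurableSet_infargmaxAt 0)) fun ω hω => ?_
  rw [hΘ, InfargmaxAt.supNormalize_eq hω]

end SupNormalize

section TailMeasure

variable [NormedAddCommGroup V] [MeasurableSpace V] {ν : Measure (ℤ → V)}

lemma ae_tendsto_zero_of_exceedance (hν : ∀ k, MeasurePreserving (backshift k) ν ν)
    (h₀ : ∀ᵐ y ∂ν, 1 < ‖y 0‖ → Tendsto y cofinite (𝓝 0)) :
    ∀ᵐ y ∂ν, ∀ m, 1 < ‖y m‖ → Tendsto y cofinite (𝓝 0) := by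
  refine ae_all_iff.2 fun m => ?_
  filter_upwards [(hν (-m)).quasiMeasurePreserving.ae h₀] with y hy hm
  simpa using (hy (by simpa [backshift_apply] using hm)).backshift m

variable [OpensMeasurableSpace V]

lemma ae_tendsto_zero_of_map_eq_restrict {Ω : Type*} [MeasurableSpace Ω] {P : Measure Ω}
    [IsProbabilityMeasure P] {Y : Ω → ℤ → V} (hY : Measurable Y)
    (hlaw : P.map Y = ν.restrict {y | 1 < ‖y 0‖})
    (hY0 : P {ω | Tendsto (fun k => ‖Y ω k‖) cofinite (𝓝 0)} = 1) :
    ∀ᵐ y ∂ν, 1 < ‖y 0‖ → Tendsto y cofinite (𝓝 0) := by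
  refine ae_imp_of_map_eq_restrict hY hlaw (measurableSet_one_lt_norm 0)
    (T := {y | Tendsto y cofinite (𝓝 0)}) measurableSet_tendsto_zero ?_
  rw [ae_iff_measure_eq (hY measurableSet_tendsto_zero).nullMeasurableSet, measure_univ]
  simpa [tendsto_zero_iff_norm_tendsto_zero] using hY0

theorem setLIntegral_firstExceedance_eq_infargmaxAt
    (hν : ∀ k, MeasurePreserving (backshift k) ν ν)
    (hreg : ∀ᵐ y ∂ν, ∀ m, 1 < ‖y m‖ → Tendsto y cofinite (𝓝 0))
    {G : (ℤ → V) → ℝ≥0∞} (hG : Measurable G) (hGs : ∀ k x, G (backshift k x) = G x) :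
    ∫⁻ y in {y | ∀ j ≤ -1, ‖y j‖ ≤ 1} ∩ {y | 1 < ‖y 0‖}, G y ∂ν
      = ∫⁻ y in {y | InfargmaxAt y 0} ∩ {y | 1 < ‖y 0‖}, G y ∂ν :=
  setLIntegral_eq_of_existsUnique_backshift_mem hν
    ((measurableSet_forall_norm_le_one _).inter (measurableSet_one_lt_norm 0))
    ((measurableSet_infargmaxAt 0).inter (measurableSet_one_lt_norm 0))
    (hreg.mono fun _ hy h => existsUnique_backshift_mem_infargmaxAt (hy 0 h.2) h.2)
    (hreg.mono fun _ hy h => existsUnique_backshift_mem_firstExceedance (hy 0 h.2) h.2) hG hGs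

theorem measure_lastExceedance_eq_firstExceedance
    (hν : ∀ k, MeasurePreserving (backshift k) ν ν)
    (hreg : ∀ᵐ y ∂ν, ∀ m, 1 < ‖y m‖ → Tendsto y cofinite (𝓝 0)) :
    ν ({y | ∀ j, 1 ≤ j → ‖y j‖ ≤ 1} ∩ {y | 1 < ‖y 0‖})
      = ν ({y | ∀ j ≤ -1, ‖y j‖ ≤ 1} ∩ {y | 1 < ‖y 0‖}) := by
  have hlast := setLIntegral_eq_of_existsUnique_backshift_mem hν
    ((measurableSet_forall_norm_le_one _).inter (measurableSet_one_lt_norm 0))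
    ((measurableSet_infargmaxAt 0).inter (measurableSet_one_lt_norm 0))
    (hreg.mono fun _ hy h => existsUnique_backshift_mem_infargmaxAt (hy 0 h.2) h.2)
    (hreg.mono fun _ hy h => existsUnique_backshift_mem_lastExceedance (hy 0 h.2) h.2)
    measurable_const (G := fun _ => 1) fun _ _ => rfl
  rw [← setLIntegral_one, ← setLIntegral_one, hlast,
    setLIntegral_firstExceedance_eq_infargmaxAt hν hreg measurable_const fun _ _ => rfl]

end TailMeasure

end SequenceSpace


theorem statement11_general
    -- `V` plays the role of `ℝ^d` (`d ≥ 1`) equipped with an arbitrary norm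
    {V : Type*} [NormedAddCommGroup V] [NormedSpace ℝ V]
    [MeasurableSpace V] [BorelSpace V]
    -- the tail measure and its properties
    (ν : Measure (ℤ → V))
    (hνshift : ν.map (backshift 1) = ν)
    -- the tail process `Y` and the spectral tail process `Θ`
    {Ω : Type*} [MeasurableSpace Ω] (P : Measure Ω) [IsProbabilityMeasure P]
    (Y : Ω → ℤ → V) (hYmeas : Measurable Y)
    (hYlaw : P.map Y = ν.restrict {y : ℤ → V | 1 < ‖y 0‖})
    (Θ : Ω → ℤ → V) (hΘdef : ∀ ω, Θ ω = ‖Y ω 0‖⁻¹ • Y ω)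
    -- `Q`: a random element (on a probability space `Ω'`) whose law is that of
    -- `Y/Y*`, `Y* = sup_{j∈ℤ} ‖Y_j‖`, conditionally on `{sup_{j≤−1} ‖Y_j‖ ≤ 1}`
    {Ω' : Type*} [MeasurableSpace Ω'] (P' : Measure Ω') [IsProbabilityMeasure P']
    (Q : Ω' → ℤ → V) (hQmeas : Measurable Q)
    (hQlaw : P'.map Q
      = (ProbabilityTheory.cond P {ω | ∀ j : ℤ, j ≤ -1 → ‖Y ω j‖ ≤ 1}).map
          (fun ω => (⨆ j : ℤ, ‖Y ω j‖)⁻¹ • Y ω))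
    -- the statement
    (hY0 : P {ω | Tendsto (fun k : ℤ => ‖Y ω k‖) cofinite (𝓝 0)} = 1)
    (H : (ℤ → V) → ℝ≥0∞) (hH : Measurable H)
    (hHshift : ∀ x, H (backshift 1 x) = H x) :
    P {ω | ∀ j : ℤ, 1 ≤ j → ‖Y ω j‖ ≤ 1} * ∫⁻ ω', H (Q ω') ∂P'
      = ∫⁻ ω in {ω | InfargmaxAt (Θ ω) 0}, H (Θ ω) ∂P := by
  set S := {y : ℤ → V | 1 < ‖y 0‖}
  set A := {ω | ∀ j : ℤ, j ≤ -1 → ‖Y ω j‖ ≤ 1}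
  have hν := measurePreserving_backshift hνshift
  have hreg :=
    ae_tendsto_zero_of_exceedance hν (ae_tendsto_zero_of_map_eq_restrict hYmeas hYlaw hY0)
  have hprob := fun p => measure_preimage_of_map_eq_restrict hYmeas hYlaw
    (measurableSet_forall_norm_le_one (V := V) p)
  have hθ : P {ω | ∀ j : ℤ, 1 ≤ j → ‖Y ω j‖ ≤ 1} = P A :=
    (hprob _).trans ((measure_lastExceedance_eq_firstExceedance hν hreg).trans (hprob _).symm)
  have hG : Measurable fun y => H (supNormalize y) := hH.comp measurable_supNormalize
  have hGs : ∀ k x, H (supNormalize (backshift k x)) = H (supNormalize x) := fun k x => by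
    rw [supNormalize_backshift, apply_backshift_eq_of_one hHshift]
  calc _ = ∫⁻ ω in A, H (supNormalize (Y ω)) ∂P := by
        rw [hθ, lintegral_comp_of_map_eq_map_cond hQmeas (measurable_supNormalize.comp hYmeas)
          hQlaw hH, ← mul_assoc, ENNReal.mul_inv_cancel
          (measure_ne_zero_of_map_eq_map_cond hQmeas hQlaw) (measure_ne_top P A), one_mul]
        rfl
    _ = ∫⁻ y in {y | ∀ j ≤ -1, ‖y j‖ ≤ 1} ∩ S, H (supNormalize y) ∂ν :=
      setLIntegral_comp_of_map_eq_restrict hYmeas hYlaw (measurableSet_forall_norm_le_one _) hG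
    _ = ∫⁻ y in {y | InfargmaxAt y 0} ∩ S, H (supNormalize y) ∂ν :=
      setLIntegral_firstExceedance_eq_infargmaxAt hν hreg hG hGs
    _ = ∫⁻ ω in Y ⁻¹' {y | InfargmaxAt y 0}, H (supNormalize (Y ω)) ∂P :=
      (setLIntegral_comp_of_map_eq_restrict hYmeas hYlaw (measurableSet_infargmaxAt 0) hG).symm
    _ = _ := (setLIntegral_infargmaxAt_eq_supNormalize hYmeas hΘdef H).symm

/-- **The law of `Q` and the spectral tail process conditioned on `I(Θ) = 0`.**
If `P(lim_{|k|→∞} ‖Y_k‖ = 0) = 1`, then for every shift invariant nonnegative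
measurable `H` on `E`, `ϑ · E[H(Q)] = E[H(Θ) 1{I(Θ) = 0}]`, where
`ϑ = P(sup_{j≥1} ‖Y_j‖ ≤ 1)`. -/
theorem statement11
    -- `V` plays the role of `ℝ^d` (`d ≥ 1`) equipped with an arbitrary norm
    {V : Type*} [NormedAddCommGroup V] [NormedSpace ℝ V] [FiniteDimensional ℝ V]
    [Nontrivial V] [MeasurableSpace V] [BorelSpace V]
    (α : ℝ) (hα : 0 < α)
    -- the tail measure and its properties
    (ν : Measure (ℤ → V))
    (hν0 : ν {0} = 0)
    (hν1 : ν {y : ℤ → V | 1 < ‖y 0‖} = 1)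
    (hνshift : ν.map (backshift 1) = ν)
    (hνhom : ∀ A : Set (ℤ → V), MeasurableSet A → ∀ c : ℝ, 0 < c →
      ν ((fun x => c • x) '' A) = ENNReal.ofReal (c ^ (-α)) * ν A)
    -- the tail process `Y` and the spectral tail process `Θ`
    {Ω : Type*} [MeasurableSpace Ω] (P : Measure Ω) [IsProbabilityMeasure P]
    (Y : Ω → ℤ → V) (hYmeas : Measurable Y)
    (hYlaw : P.map Y = ν.restrict {y : ℤ → V | 1 < ‖y 0‖})
    (Θ : Ω → ℤ → V) (hΘdef : ∀ ω, Θ ω = ‖Y ω 0‖⁻¹ • Y ω)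
    (hPareto : ∀ u : ℝ, 1 ≤ u → P {ω | u < ‖Y ω 0‖} = ENNReal.ofReal (u ^ (-α)))
    (hindep : IndepFun (fun ω => ‖Y ω 0‖) Θ P)
    (hpolar : ∀ H : (ℤ → V) → ℝ≥0∞, Measurable H →
      ∫⁻ y in {y : ℤ → V | y 0 ≠ 0}, H y ∂ν
        = ∫⁻ r in Ioi (0 : ℝ),
            (∫⁻ ω, H (r • Θ ω) ∂P) * ENNReal.ofReal (α * r ^ (-α - 1)))
    -- `Q`: a random element (on a probability space `Ω'`) whose law is that of
    -- `Y/Y*`, `Y* = sup_{j∈ℤ} ‖Y_j‖`, conditionally on `{sup_{j≤−1} ‖Y_j‖ ≤ 1}`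
    {Ω' : Type*} [MeasurableSpace Ω'] (P' : Measure Ω') [IsProbabilityMeasure P']
    (Q : Ω' → ℤ → V) (hQmeas : Measurable Q)
    (hQlaw : P'.map Q
      = (ProbabilityTheory.cond P {ω | ∀ j : ℤ, j ≤ -1 → ‖Y ω j‖ ≤ 1}).map
          (fun ω => (⨆ j : ℤ, ‖Y ω j‖)⁻¹ • Y ω))
    -- the statement
    (hY0 : P {ω | Tendsto (fun k : ℤ => ‖Y ω k‖) cofinite (𝓝 0)} = 1)
    (H : (ℤ → V) → ℝ≥0∞) (hH : Measurable H)
    (hHshift : ∀ x, H (backshift 1 x) = H x) :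
    P {ω | ∀ j : ℤ, 1 ≤ j → ‖Y ω j‖ ≤ 1} * ∫⁻ ω', H (Q ω') ∂P'
      = ∫⁻ ω in {ω | InfargmaxAt (Θ ω) 0}, H (Θ ω) ∂P :=
  statement11_general ν hνshift P Y hYmeas hYlaw Θ hΘdef P' Q hQmeas hQlaw hY0 H hH hHshift
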